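/- Fix types α (tensor elements), β (fixed data for axes of other rank classes), and V (rule variables), natural numbers n, m, p, h with 1 ≤ h ≤ p, index transformers e : Fin n → Fin h → (V → ℤ) → ℤ, condition predicates g : Fin m → Fin p → (V → ℤ) → Prop, a scalar function scalarf : (Fin n → α) → (Fin m → Prop) → Prop, and a restriction-monotone family of precondition predicates Pre : ∀ i : ℕ, ((Fin p → Fin i → V → ℤ) → Prop). For a rank i, define valid i := ∀ (X : (Fin h → Fin i → ℤ) → β → α) (v : Fin p → Fin i → (V → ℤ)) (Y : Fin n → β) (φ : Fin m → Prop) (ψ : Prop), (ψ ∧ Pre i v) → scalarf (fun r => X (fun t j => e r t (v (embedding of t into Fin p) j)) (Y r)) (fun l => φ l ∧ ∀ (t : Fin p) (j : Fin i), g l t (v t j)). Then for every k with max (m + n.choose 2) 1 ≤ k, valid k implies valid (k + 1). -/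
import Mathlib


/-- Validity at rank `i` of a rewrite rule in which only the aggregated-axes of one
fixed rank class (there are `p` of them, the first `h` indexing the single input tensor
`X`) are varied, while all data of the other rank classes is held fixed: `Y r` is the
other-class access data of the `r`-th access, `φ l` is the other-class part of the
`l`-th condition, and `ψ` is the other-class part of the precondition. -/
def Valid {α β V : Type*} (n m p h : ℕ) (hhp : h ≤ p)
    (e : Fin n → Fin h → (V → ℤ) → ℤ)
    (g : Fin m → Fin p → (V → ℤ) → Prop)
    (scalarf : (Fin n → α) → (Fin m → Prop) → Prop)
    (Pre : ∀ i : ℕ, (Fin p → Fin i → V → ℤ) → Prop)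
    (i : ℕ) : Prop :=
  ∀ (X : (Fin h → Fin i → ℤ) → β → α) (v : Fin p → Fin i → V → ℤ)
    (Y : Fin n → β) (φ : Fin m → Prop) (ψ : Prop),
    (ψ ∧ Pre i v) →
      scalarf (fun r => X (fun t j => e r t (v (Fin.castLE hhp t) j)) (Y r))
        (fun l => φ l ∧ ∀ (t : Fin p) (j : Fin i), g l t (v t j))

/-- Sufficient-rank lemma stating that the per-rank-class bound is independent of the
ranks of the other rank classes: for every `k ≥ max (m + C(n,2)) 1`, validity at rank
`k` implies validity at rank `k+1`. -/
theorem sufficient_rank_other_classes {α β V : Type*} (n m p h : ℕ)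
    (hh : 1 ≤ h) (hhp : h ≤ p)
    (e : Fin n → Fin h → (V → ℤ) → ℤ)
    (g : Fin m → Fin p → (V → ℤ) → Prop)
    (scalarf : (Fin n → α) → (Fin m → Prop) → Prop)
    (Pre : ∀ i : ℕ, (Fin p → Fin i → V → ℤ) → Prop)
    (hPre : ∀ (k i : ℕ), k ≤ i → ∀ ρ : Fin k → Fin i, Function.Injective ρ →
      ∀ v : Fin p → Fin i → V → ℤ, Pre i v → Pre k (fun t j => v t (ρ j)))
    (k : ℕ) (hk : max (m + n.choose 2) 1 ≤ k) :
    Valid (α := α) (β := β) n m p h hhp e g scalarf Pre k →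
      Valid (α := α) (β := β) n m p h hhp e g scalarf Pre (k + 1) := by
  classical
  intro hval X v Y φ ψ hpre
  obtain ⟨hψ, hPrev⟩ := hpre
  -- the access tuples at rank k+1
  set A : Fin n → Fin h → Fin (k + 1) → ℤ :=
    fun r t j => e r t (v (Fin.castLE hhp t) j) with hAdef
  have hkn : n.choose 2 ≤ k :=
    le_trans (le_trans (Nat.le_add_left _ _) (le_max_left _ _)) hk
  -- find a column j0 whose removal keeps the access tuples distinguishable
  obtain ⟨j0, hj0⟩ : ∃ j0 : Fin (k + 1), ∀ r r' : Fin n,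
      (∀ (t : Fin h) (j : Fin (k + 1)), j ≠ j0 → A r t j = A r' t j) → A r = A r' := by
    by_contra hcon
    push_neg at hcon
    choose R R' hRR hne using hcon
    have hdiff : ∀ j0 : Fin (k + 1), ∃ t : Fin h, A (R j0) t j0 ≠ A (R' j0) t j0 := by
      intro j0
      by_contra hall
      push_neg at hall
      exact hne j0 (funext fun t => funext fun j => by
        rcases eq_or_ne j j0 with rfl | hj
        · exact hall t
        · exact hRR j0 t j hj)
    have hRne : ∀ j0, R j0 ≠ R' j0 := by
      intro j0 hEq
      obtain ⟨t, ht⟩ := hdiff j0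
      exact ht (by rw [hEq])
    set F : Fin (k + 1) → Finset (Fin n) := fun j0 => {R j0, R' j0} with hF
    have hmem : ∀ j0 ∈ (Finset.univ : Finset (Fin (k + 1))),
        F j0 ∈ Finset.powersetCard 2 (Finset.univ : Finset (Fin n)) := by
      intro j0 _
      rw [Finset.mem_powersetCard]
      exact ⟨Finset.subset_univ _, Finset.card_pair (hRne j0)⟩
    have hinj : ∀ j0 ∈ (Finset.univ : Finset (Fin (k + 1))),
        ∀ j1 ∈ (Finset.univ : Finset (Fin (k + 1))), F j0 = F j1 → j0 = j1 := by
      intro j0 _ j1 _ hFeq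
      by_contra hne01
      -- the pairs coincide, so the unique differing column is both j0 and j1
      have hpair : ({R j0, R' j0} : Finset (Fin n)) = {R j1, R' j1} := hFeq
      have hsub : R j0 ∈ ({R j1, R' j1} : Finset (Fin n)) := by
        rw [← hpair]; simp
      have hsub' : R' j0 ∈ ({R j1, R' j1} : Finset (Fin n)) := by
        rw [← hpair]; simp
      simp only [Finset.mem_insert, Finset.mem_singleton] at hsub hsub'
      obtain ⟨t, ht⟩ := hdiff j0
      -- A (R j0) and A (R' j0) agree away from j0; in particular at j0 viewed from j1's pair
      have hagree : A (R j0) t j0 = A (R' j0) t j0 := by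
        rcases hsub with h1 | h1 <;> rcases hsub' with h2 | h2
        · exact absurd (h1.trans h2.symm) (hRne j0)
        · rw [h1, h2]; exact hRR j1 t j0 hne01
        · rw [h1, h2]; exact (hRR j1 t j0 hne01).symm
        · exact absurd (h1.trans h2.symm) (hRne j0)
      exact ht hagree
    have := Finset.card_le_card_of_injOn F hmem
      (fun a _ b _ hab => hinj a (Finset.mem_univ a) b (Finset.mem_univ b) hab)
    simp only [Finset.card_univ, Fintype.card_fin, Finset.card_powersetCard,
      Finset.card_univ, Fintype.card_fin] at this
    omega
  -- restrict to rank k by skipping column j0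
  set ρ : Fin k → Fin (k + 1) := j0.succAbove with hρ
  have hρinj : Function.Injective ρ := Fin.succAbove_right_injective
  set v' : Fin p → Fin k → V → ℤ := fun t j => v t (ρ j) with hv'
  have hPrev' : Pre k v' := hPre k (k + 1) (Nat.le_succ k) ρ hρinj v hPrev
  -- rank-k input tensor: extend the restricted access tuple back to rank k+1
  set X' : (Fin h → Fin k → ℤ) → β → α := fun M b =>
    if hM : ∃ r, (fun t j => A r t (ρ j)) = M then X (A hM.choose) b
    else X (fun _ _ => 0) b with hX'
  set φ' : Fin m → Prop := fun l => φ l ∧ ∀ t : Fin p, g l t (v t j0) with hφ'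
  have key := hval X' v' Y φ' ψ ⟨hψ, hPrev'⟩
  have h1 : (fun r => X' (fun t j => e r t (v' (Fin.castLE hhp t) j)) (Y r)) =
      (fun r => X (fun t j => e r t (v (Fin.castLE hhp t) j)) (Y r)) := by
    funext r
    have hEx : ∃ r', (fun t j => A r' t (ρ j)) =
        (fun t j => e r t (v' (Fin.castLE hhp t) j)) := ⟨r, rfl⟩
    simp only [hX', dif_pos hEx]
    congr 1
    apply hj0
    intro t j hj
    obtain ⟨j', rfl⟩ := Fin.exists_succAbove_eq hj
    exact congrFun (congrFun hEx.choose_spec t) j'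
  have h2 : (fun l => φ' l ∧ ∀ (t : Fin p) (j : Fin k), g l t (v' t j)) =
      (fun l => φ l ∧ ∀ (t : Fin p) (j : Fin (k + 1)), g l t (v t j)) := by
    funext l
    simp only [hφ', hv', eq_iff_iff, and_assoc]
    constructor
    · rintro ⟨hφl, hj0g, hrest⟩
      refine ⟨hφl, fun t j => ?_⟩
      rcases eq_or_ne j j0 with rfl | hj
      · exact hj0g t
      · obtain ⟨j', rfl⟩ := Fin.exists_succAbove_eq hj
        exact hrest t j'
    · rintro ⟨hφl, hall⟩
      exact ⟨hφl, fun t => hall t j0, fun t j => hall t (ρ j)⟩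
  rw [h1, h2] at key
  exact key
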